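/- arXiv:1308.4668 — 8 statements merged into one kernel-verified Lean document; each statement's English description precedes it below -/
import Mathlib

section
/- The system of equations zm³ − m² − zm − 1 = 0 and 3zm² − 2m − z = 0 in complex numbers (z,m) has exactly four solutions: (−ζ, ω), (ζ, −ω), (−i/ζ, i/ω), (i/ζ, −i/ω), where ω = √(√5−2) and ζ = √((11+5√5)/2). -/
/-!
Since `m · ∂ₘf − 3f = m² + 2zm + 3`, a critical point has `m ≠ 0` and `z = −(m² + 3)/(2m)`;
substituting back leaves `m⁴ + 4m² − 1 = 0`. Given one root `ω`, this quartic factors as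
`(m² − ω²)(ω²m² + 1)/ω²`, so `m ∈ {±ω, ±i/ω}`, and `ζ = (ω² + 3)/(2ω)` turns the corresponding
values of `z` into `∓ζ` and `∓i/ζ`.
-/

section Field

variable {K : Type*} [Field K]

theorem quartic_eq_zero_iff {w i : K} (hi : i ^ 2 = -1) (hw : w ^ 4 + 4 * w ^ 2 - 1 = 0) (m : K) :
    m ^ 4 + 4 * m ^ 2 - 1 = 0 ↔ m = w ∨ m = -w ∨ m = i / w ∨ m = -(i / w) := by
  have hw0 : w ≠ 0 := by rintro rfl; norm_num at hw
  have factor :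
      w ^ 2 * (m ^ 4 + 4 * m ^ 2 - 1) = (m - w) * (m + w) * (w * m - i) * (w * m + i) := by
    linear_combination m ^ 2 * hw + (m ^ 2 - w ^ 2) * hi
  have root_i : w * m - i = 0 ↔ m = i / w := by
    rw [eq_div_iff hw0, sub_eq_zero, mul_comm]
  have root_neg_i : w * m + i = 0 ↔ m = -(i / w) := by
    rw [← neg_div, eq_div_iff hw0]; constructor <;> intro h <;> linear_combination h
  rw [← mul_right_inj' (pow_ne_zero 2 hw0), mul_zero, factor]
  simp only [mul_eq_zero, sub_eq_zero, add_eq_zero_iff_eq_neg, root_i, root_neg_i, or_assoc]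

theorem critical_point_iff [CharZero K] (z m : K) :
    (z * m ^ 3 - m ^ 2 - z * m - 1 = 0 ∧ 3 * z * m ^ 2 - 2 * m - z = 0) ↔
      m ^ 4 + 4 * m ^ 2 - 1 = 0 ∧ z = -(m ^ 2 + 3) / (2 * m) := by
  constructor
  · rintro ⟨hf, hg⟩
    have hm : m ≠ 0 := by rintro rfl; norm_num at hf
    have hz : m ^ 2 + 2 * z * m + 3 = 0 := by linear_combination m * hg - 3 * hf
    refine ⟨?_, ?_⟩
    · linear_combination (-(2 * m) / 3) * hg + ((3 * m ^ 2 - 1) / 3) * hz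
    · rw [eq_div_iff (mul_ne_zero two_ne_zero hm)]
      linear_combination hz
  · rintro ⟨hq, rfl⟩
    have hm : m ≠ 0 := by rintro rfl; norm_num at hq
    constructor
    · field_simp
      linear_combination -hq
    · field_simp
      linear_combination -3 * hq

theorem critical_point_iff_eq [CharZero K] {w s i : K} (hi : i ^ 2 = -1)
    (hw : w ^ 4 + 4 * w ^ 2 - 1 = 0) (hs : 2 * s * w = w ^ 2 + 3) (z m : K) :
    (z * m ^ 3 - m ^ 2 - z * m - 1 = 0 ∧ 3 * z * m ^ 2 - 2 * m - z = 0) ↔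
      (z, m) = (-s, w) ∨ (z, m) = (s, -w) ∨ (z, m) = (-(i / s), i / w) ∨
        (z, m) = (i / s, -(i / w)) := by
  have hw0 : w ≠ 0 := by rintro rfl; norm_num at hw
  have hs0 : s ≠ 0 := by
    rintro rfl
    have : (4 : K) = 0 := by linear_combination -hw - (w ^ 2 + 1) * hs
    norm_num at this
  have hi0 : i ≠ 0 := by rintro rfl; norm_num at hi
  -- the form of `hs` that evaluates `z` at `m = ±i/w`
  have hs' : s * (1 - 3 * w ^ 2) = 2 * w := by
    refine mul_left_cancel₀ (mul_ne_zero two_ne_zero hw0) ?_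
    linear_combination (1 - 3 * w ^ 2) * hs - 3 * hw
  have z_of_w : -(w ^ 2 + 3) / (2 * w) = -s := by
    field_simp; linear_combination hs
  have z_of_neg_w : -((-w) ^ 2 + 3) / (2 * -w) = s := by
    field_simp; linear_combination -hs
  have z_of_i_div_w : -((i / w) ^ 2 + 3) / (2 * (i / w)) = -(i / s) := by
    field_simp
    linear_combination hs' + (2 * w - s) * hi
  have z_of_neg_i_div_w : -((-(i / w)) ^ 2 + 3) / (2 * -(i / w)) = i / s := by
    field_simp
    linear_combination -hs' + (s - 2 * w) * hi
  rw [critical_point_iff, quartic_eq_zero_iff hi hw]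
  constructor
  · rintro ⟨rfl | rfl | rfl | rfl, rfl⟩
    all_goals simp only [z_of_w, z_of_neg_w, z_of_i_div_w, z_of_neg_i_div_w, true_or, or_true]
  · rintro (h | h | h | h) <;> obtain ⟨rfl, rfl⟩ := Prod.mk.inj h
    all_goals
      simp only [z_of_w, z_of_neg_w, z_of_i_div_w, z_of_neg_i_div_w, true_or, or_true, and_true]

end Field

noncomputable def ω : ℝ := √(√5 - 2)

noncomputable def ζ : ℝ := √((11 + 5 * √5) / 2)

lemma ω_sq : ω ^ 2 = √5 - 2 :=
  Real.sq_sqrt (sub_nonneg.2 ((Real.le_sqrt' two_pos).2 (by norm_num)))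

lemma ω_quartic : ω ^ 4 + 4 * ω ^ 2 - 1 = 0 := by
  have h5 : √5 ^ 2 = 5 := Real.sq_sqrt (by norm_num)
  linear_combination (ω ^ 2 + √5 + 2) * ω_sq + h5

lemma two_mul_ζ_mul_ω : 2 * ζ * ω = ω ^ 2 + 3 := by
  have h5 : √5 ^ 2 = 5 := Real.sq_sqrt (by norm_num)
  have hζ : ζ ^ 2 = (11 + 5 * √5) / 2 := Real.sq_sqrt (by positivity)
  rw [← pow_left_inj₀ (by unfold ζ ω; positivity) (by positivity) two_ne_zero]
  linear_combination 4 * ω ^ 2 * hζ + (18 + 9 * √5 - ω ^ 2) * ω_sq + 9 * h5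

theorem stmt_3 :
    {p : ℂ × ℂ | p.1 * p.2 ^ 3 - p.2 ^ 2 - p.1 * p.2 - 1 = 0 ∧
        3 * p.1 * p.2 ^ 2 - 2 * p.2 - p.1 = 0} =
      {(-(Real.sqrt ((11 + 5 * Real.sqrt 5) / 2) : ℂ), (Real.sqrt (Real.sqrt 5 - 2) : ℂ)),
       ((Real.sqrt ((11 + 5 * Real.sqrt 5) / 2) : ℂ), -(Real.sqrt (Real.sqrt 5 - 2) : ℂ)),
       (-(Complex.I / (Real.sqrt ((11 + 5 * Real.sqrt 5) / 2) : ℂ)),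
        Complex.I / (Real.sqrt (Real.sqrt 5 - 2) : ℂ)),
       (Complex.I / (Real.sqrt ((11 + 5 * Real.sqrt 5) / 2) : ℂ),
        -(Complex.I / (Real.sqrt (Real.sqrt 5 - 2) : ℂ)))} := by
  ext ⟨z, m⟩
  have hω : (ω : ℂ) ^ 4 + 4 * (ω : ℂ) ^ 2 - 1 = 0 := by exact_mod_cast ω_quartic
  have hζ : 2 * (ζ : ℂ) * ω = (ω : ℂ) ^ 2 + 3 := by exact_mod_cast two_mul_ζ_mul_ω
  exact critical_point_iff_eq Complex.I_sq hω hζ z m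
end

section
/- For each z in the upper half-plane there exists a unique m in the upper half-plane such that z = (m²+1)/(m³−m). -/
open Complex Polynomial

set_option maxHeartbeats 1000000

private lemma coreA (xi ze e1 e2 ya yb d1 d2 D n1 n2 R K : ℝ)
    (hya : 0 < ya) (hyb : 0 < yb) (hze : ze < 0)
    (hd1 : d1 = 1+xi*xi-ze*ze) (hd2 : d2 = 2*xi*ze) (hDd : D = d1^2+d2^2)
    (hn1 : n1 = 1+xi*xi-ze*ze-(xi^4-6*xi^2*ze^2+ze^4))
    (hn2 : n2 = 2*xi*ze-(4*xi^3*ze-4*xi*ze^3))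
    (hRd : R = 4*ze^2*(1-xi*xi-ze*ze)^2 + 2*(n1*(d1^2-d2^2)+2*n2*(d1*d2)))
    (hKd : K = (xi*xi+ze*ze)^2 + 4*(xi*xi) - 1)
    (hD : 0 < D)
    (F1 : (ya+yb)*D = -2*(ze*(1-xi*xi-ze*ze)))
    (F2 : (ya-yb)*D = e2*d1 - e1*d2)
    (F3 : e1*e1-e2*e2 = 4*n1) (F4 : e1*e2 = 2*n2) : K < 0 := by
  have q1 : ((ya+yb)*D)^2 = 4*ze^2*(1-xi*xi-ze*ze)^2 := by rw [F1]; ring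
  have q2 : (e2*d1 - e1*d2)^2 = ((ya-yb)*D)^2 := by rw [F2]
  have hq : ((ya+yb)*D)^2 - ((ya-yb)*D)^2 = 4*(ya*yb*D^2) := by ring
  have hp : 0 < ya*yb*D^2 := mul_pos (mul_pos hya hyb) (pow_pos hD 2)
  have h6 : (e2*d1 - e1*d2)^2 < 4*ze^2*(1-xi*xi-ze*ze)^2 := by linarith
  have hexp : (e2*d1 - e1*d2)^2
      = (e1*e1+e2*e2)*(d1^2+d2^2)/2 - 2*n1*(d1^2-d2^2) - 4*n2*(d1*d2) := by
    linear_combination (-((d1^2-d2^2))/2)*F3 + (-2*(d1*d2))*F4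
  have hSD : (e1*e1+e2*e2)*D < 2*R := by
    rw [hDd, hRd]; linarith [h6, hexp]
  have hS : (0:ℝ) ≤ e1*e1+e2*e2 := add_nonneg (mul_self_nonneg e1) (mul_self_nonneg e2)
  have hSDnn : (0:ℝ) ≤ (e1*e1+e2*e2)*D := mul_nonneg hS hD.le
  have hRpos : (0:ℝ) < R := by linarith
  have hprod : (0:ℝ) < (2*R - (e1*e1+e2*e2)*D) * (2*R + (e1*e1+e2*e2)*D) := by
    have h1 : (0:ℝ) < 2*R - (e1*e1+e2*e2)*D := by linarith
    have h2 : (0:ℝ) < 2*R + (e1*e1+e2*e2)*D := by linarith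
    exact mul_pos h1 h2
  have hexp2 : (2*R - (e1*e1+e2*e2)*D) * (2*R + (e1*e1+e2*e2)*D)
      = 4*R^2 - ((e1*e1+e2*e2)*D)^2 := by ring
  have hsq : ((e1*e1+e2*e2)*D)^2 < 4*R^2 := by linarith
  have hSsq : (e1*e1+e2*e2)^2 = 16*(n1^2+n2^2) := by
    linear_combination (e1*e1-e2*e2+4*n1)*F3 + (4*(e1*e2)+8*n2)*F4
  have hSsqD : ((e1*e1+e2*e2)*D)^2 = 16*(n1^2+n2^2)*D^2 := by
    rw [mul_pow, hSsq]
  have hcomb : 4*(n1^2+n2^2)*D^2 - R^2 < 0 := by linarith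
  have ID : 4*(n1^2+n2^2)*D^2 - R^2 = 16*(ze^2*K*D^2) := by
    subst hd1 hd2 hDd hn1 hn2 hRd hKd; ring
  have hfin : 16*(ze^2*K*D^2) < 0 := by linarith
  have hz2 : (0:ℝ) < ze^2 := pow_two_pos_of_ne_zero (ne_of_lt hze)
  by_contra hK
  push_neg at hK
  have hKD : 0 ≤ ze^2*K*D^2 := mul_nonneg (mul_nonneg hz2.le hK) (pow_pos hD 2).le
  linarith

private lemma third_im (a b c : ℂ) (ha : 0 < a.im) (hb : 0 < b.im)
    (h : c * (a * b - 1) = a + b) : c.im < 0 := by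
  have key : ((a+b) * (starRingEnd ℂ) (a*b-1)).im
      = -(b.im*(a.re^2+a.im^2) + a.im*(b.re^2+b.im^2) + a.im + b.im) := by
    simp only [Complex.mul_im, Complex.add_re, Complex.add_im, Complex.conj_re,
      Complex.conj_im, Complex.sub_re, Complex.sub_im, Complex.mul_re,
      Complex.one_re, Complex.one_im]
    ring
  have h2 : ((a+b) * (starRingEnd ℂ) (a*b-1)).im = c.im * normSq (a*b-1) := by
    rw [← h, mul_assoc, Complex.mul_conj]
    simp [Complex.mul_im]
  have hpos : 0 < b.im*(a.re^2+a.im^2) + a.im*(b.re^2+b.im^2) + a.im + b.im := by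
    have h1 : 0 ≤ b.im*(a.re^2+a.im^2) := mul_nonneg hb.le (by positivity)
    have h3 : 0 ≤ a.im*(b.re^2+b.im^2) := mul_nonneg ha.le (by positivity)
    linarith
  have h3 : c.im * normSq (a*b-1) < 0 := by rw [← h2, key]; linarith
  by_contra hge
  push_neg at hge
  have := mul_nonneg hge (normSq_nonneg (a*b-1))
  linarith

private lemma lemA (a b w : ℂ) (ha : 0 < a.im) (hb : 0 < b.im)
    (hcon : (a+b)^2 + (a*b)^2 = 1)
    (hw : w * (a*b - 1) = a*b*(a+b)) : 0 ≤ w.im := by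
  have hp1 : a*b - 1 ≠ 0 := by
    intro h
    have hs0 : (a+b)^2 = 0 := by linear_combination hcon + (-(a*b+1))*h
    have hab : a + b = 0 := pow_eq_zero_iff two_ne_zero |>.mp hs0
    have hba : b = -a := by linear_combination hab
    rw [hba] at hb
    simp only [neg_im] at hb
    linarith
  set c : ℂ := (a+b)/(a*b-1) with hcdef
  have hc : c*(a*b-1) = a+b := div_mul_cancel₀ _ hp1
  have hcim : c.im < 0 := third_im a b c ha hb hc
  have h0 : (a*b-1) * (c*c*(a*b-1) + (1+a*b)) = 0 := by
    linear_combination (c*(a*b-1)+(a+b))*hc + hcon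
  have hE : c*c*(a*b-1) = -(1+a*b) := by
    rcases mul_eq_zero.mp h0 with h|h
    · exact absurd h hp1
    · linear_combination h
  have hd : (1:ℂ) + c*c ≠ 0 := by
    intro h
    have h2 : (2:ℂ) = 0 := by linear_combination hE - (a*b-1)*h
    exact two_ne_zero h2
  have rel1 : (a+b)*(1+c*c) = -(2*c) := by
    linear_combination (-(1:ℂ)-c*c)*hc + c*hE
  have rel2 : (a*b)*(1+c*c) = c*c-1 := by
    linear_combination hE
  have C3 : ((a-b)*(1+c*c))*((a-b)*(1+c*c)) = 4*(1+c*c-(c*c)*(c*c)) := by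
    linear_combination ((a+b)*(1+c*c) - 2*c)*rel1 + (-4*(1+c*c))*rel2
  have C1 : (a+b) * (normSq (1+c*c) : ℂ) = -(2*c) * (starRingEnd ℂ) (1+c*c) := by
    rw [← Complex.mul_conj, ← mul_assoc, rel1]
  have C2 : (a-b) * (normSq (1+c*c) : ℂ) = ((a-b)*(1+c*c)) * (starRingEnd ℂ) (1+c*c) := by
    rw [← Complex.mul_conj, ← mul_assoc]
  have F1raw := congrArg Complex.im C1
  have F2raw := congrArg Complex.im C2
  have F3raw := congrArg Complex.re C3
  have F4raw := congrArg Complex.im C3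
  simp only [Complex.mul_im, Complex.mul_re, Complex.add_re, Complex.add_im,
    Complex.sub_re, Complex.sub_im, Complex.one_re, Complex.one_im, Complex.conj_re,
    Complex.conj_im, Complex.ofReal_re, Complex.ofReal_im, Complex.neg_re, Complex.neg_im,
    Complex.normSq_apply, Complex.re_ofNat, Complex.im_ofNat, mul_zero, zero_mul,
    add_zero, zero_add, sub_zero, neg_zero] at F1raw F2raw F3raw F4raw
  have hDc : (0:ℝ) < normSq (1+c*c) := normSq_pos.mpr hd
  simp only [Complex.normSq_apply, Complex.add_re, Complex.add_im, Complex.mul_re,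
    Complex.mul_im, Complex.one_re, Complex.one_im, mul_zero, zero_mul, add_zero,
    zero_add, sub_zero] at hDc
  have hDr : (0:ℝ) < (1+c.re*c.re-c.im*c.im)^2 + (2*c.re*c.im)^2 := by nlinarith [hDc]
  have F1 : (a.im+b.im)*((1+c.re*c.re-c.im*c.im)^2 + (2*c.re*c.im)^2)
      = -2*(c.im*(1-c.re*c.re-c.im*c.im)) := by linear_combination F1raw
  have F2 : (a.im-b.im)*((1+c.re*c.re-c.im*c.im)^2 + (2*c.re*c.im)^2)
      = ((a-b)*(1+c*c)).im*(1+c.re*c.re-c.im*c.im) - ((a-b)*(1+c*c)).re*(2*c.re*c.im) := by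
    simp only [Complex.mul_im, Complex.mul_re, Complex.add_re, Complex.add_im,
      Complex.sub_re, Complex.sub_im, Complex.one_re, Complex.one_im, mul_zero, zero_mul,
      add_zero, zero_add, sub_zero]
    linear_combination F2raw
  have F3 : ((a-b)*(1+c*c)).re*((a-b)*(1+c*c)).re - ((a-b)*(1+c*c)).im*((a-b)*(1+c*c)).im
      = 4*(1+c.re*c.re-c.im*c.im-(c.re^4-6*c.re^2*c.im^2+c.im^4)) := by
    simp only [Complex.mul_im, Complex.mul_re, Complex.add_re, Complex.add_im,
      Complex.sub_re, Complex.sub_im, Complex.one_re, Complex.one_im, mul_zero, zero_mul,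
      add_zero, zero_add, sub_zero]
    linear_combination F3raw
  have F4 : ((a-b)*(1+c*c)).re*((a-b)*(1+c*c)).im
      = 2*(2*c.re*c.im-(4*c.re^3*c.im-4*c.re*c.im^3)) := by
    simp only [Complex.mul_im, Complex.mul_re, Complex.add_re, Complex.add_im,
      Complex.sub_re, Complex.sub_im, Complex.one_re, Complex.one_im, mul_zero, zero_mul,
      add_zero, zero_add, sub_zero]
    linear_combination (1/2 : ℝ)*F4raw
  have hK := coreA c.re c.im ((a-b)*(1+c*c)).re ((a-b)*(1+c*c)).im a.im b.im
    (1+c.re*c.re-c.im*c.im) (2*c.re*c.im)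
    ((1+c.re*c.re-c.im*c.im)^2 + (2*c.re*c.im)^2)
    (1+c.re*c.re-c.im*c.im-(c.re^4-6*c.re^2*c.im^2+c.im^4))
    (2*c.re*c.im-(4*c.re^3*c.im-4*c.re*c.im^3))
    (4*c.im^2*(1-c.re*c.re-c.im*c.im)^2
      + 2*((1+c.re*c.re-c.im*c.im-(c.re^4-6*c.re^2*c.im^2+c.im^4))*((1+c.re*c.re-c.im*c.im)^2-(2*c.re*c.im)^2)
        +2*(2*c.re*c.im-(4*c.re^3*c.im-4*c.re*c.im^3))*((1+c.re*c.re-c.im*c.im)*(2*c.re*c.im))))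
    ((c.re*c.re+c.im*c.im)^2 + 4*(c.re*c.re) - 1)
    ha hb hcim rfl rfl rfl rfl rfl rfl rfl hDr F1 F2 F3 F4
  have hwv : w = a+b+c := by
    have h1 : (w - (a+b+c))*(a*b-1) = 0 := by linear_combination hw - hc
    rcases mul_eq_zero.mp h1 with h|h
    · linear_combination h
    · exact absurd h hp1
  have hwim : w.im * ((1+c.re*c.re-c.im*c.im)^2 + (2*c.re*c.im)^2)
      = c.im * ((c.re*c.re+c.im*c.im)^2 + 4*(c.re*c.re) - 1) := by
    rw [hwv]
    simp only [Complex.add_im]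
    linear_combination F1
  have hpos : 0 < c.im * ((c.re*c.re+c.im*c.im)^2 + 4*(c.re*c.re) - 1) :=
    mul_pos_of_neg_of_neg hcim hK
  nlinarith [hwim, hpos, hDr]

theorem stmt_7 (z : ℂ) (hz : 0 < z.im) :
    ∃! m : ℂ, 0 < m.im ∧ z = (m ^ 2 + 1) / (m ^ 3 - m) := by
  have hz0 : z ≠ 0 := by
    intro h; rw [h] at hz; simp at hz
  have hzw : z * z⁻¹ = 1 := mul_inv_cancel₀ hz0
  have equiv : ∀ m : ℂ, (z = (m ^ 2 + 1) / (m ^ 3 - m) ↔ z*m^3 - m^2 - z*m - 1 = 0) := by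
    intro m
    constructor
    · intro heq
      have hm3 : m^3 - m ≠ 0 := by
        intro h
        rw [h, div_zero] at heq
        rw [heq] at hz; simp at hz
      have heq' : z*(m^3-m) = m^2+1 := by
        rw [heq, div_mul_cancel₀ _ hm3]
      linear_combination heq'
    · intro hcube
      have hm3 : m^3 - m ≠ 0 := by
        intro h
        have hm2 : m^2 + 1 = 0 := by linear_combination -hcube + z*h
        have hm0 : (-2:ℂ)*m = 0 := by linear_combination h - m*hm2
        have hmz : m = 0 := by
          rcases mul_eq_zero.mp hm0 with h'|h'
          · norm_num at h'
          · exact h'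
        rw [hmz] at hm2; norm_num at hm2
      rw [eq_div_iff hm3]
      linear_combination hcube
  have nonreal : ∀ t : ℂ, z*t^3 - t^2 - z*t - 1 = 0 → t.im ≠ 0 := by
    intro t ht h0
    have ht' : z*(t*t*t) - t*t - z*t - 1 = 0 := by linear_combination ht
    have hre := congrArg Complex.re ht'
    have him := congrArg Complex.im ht'
    simp only [Complex.mul_re, Complex.mul_im, Complex.sub_re, Complex.sub_im,
      Complex.one_re, Complex.one_im, Complex.zero_re, Complex.zero_im] at hre him
    rw [h0] at hre him
    have hA : z.im*(t.re*t.re*t.re - t.re) = 0 := by linear_combination him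
    have hA' : t.re*t.re*t.re - t.re = 0 :=
      (mul_eq_zero.mp hA).resolve_left (ne_of_gt hz)
    have hB : t.re*t.re + 1 = 0 := by linear_combination -hre + z.re*hA'
    nlinarith [mul_self_nonneg t.re, hB]
  have uniq : ∀ m m' : ℂ, 0 < m.im → 0 < m'.im → z*m^3 - m^2 - z*m - 1 = 0 →
      z*m'^3 - m'^2 - z*m' - 1 = 0 → m = m' := by
    intro m m' h1 h2 e1 e2
    by_contra hne
    have hfac : (m - m')*(z*(m*m + m*m' + m'*m') - (m+m') - z) = 0 := by
      linear_combination e1 - e2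
    have hJ1 : z*(m*m + m*m' + m'*m') - (m+m') - z = 0 :=
      (mul_eq_zero.mp hfac).resolve_left (sub_ne_zero.mpr hne)
    have hR2 : z*((m*m')*(m+m')) = m*m' - 1 := by
      linear_combination ((m+m')/2)*hJ1 - (1/2)*e1 - (1/2)*e2
    have hs : (m+m') + z*(m*m')*(m*m') + z*(m*m') = 0 := by
      linear_combination (-(m*m'))*hJ1 + (m+m')*hR2
    have hcon : (m+m')^2 + (m*m')^2 = 1 := by
      linear_combination (m+m')*hs - (m*m'+1)*hR2
    have hw' : z⁻¹ * (m*m' - 1) = m*m'*(m+m') := by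
      rw [← hR2, inv_mul_cancel_left₀ hz0]
    have him := lemA m m' z⁻¹ h1 h2 hcon hw'
    have hneg : (z⁻¹).im < 0 := by
      rw [inv_im]
      exact div_neg_of_neg_of_pos (by linarith) (normSq_pos.mpr hz0)
    linarith
  obtain ⟨ra, hra⟩ : ∃ x : ℂ, x^3 - z⁻¹*x^2 - x - z⁻¹ = 0 := by
    have hdeg : (C 1 * X ^ 3 + C (-z⁻¹) * X ^ 2 + C (-1) * X + C (-z⁻¹)).degree = 3 :=
      Polynomial.degree_cubic one_ne_zero
    obtain ⟨r, hr⟩ := Complex.exists_root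
      (f := C 1 * X ^ 3 + C (-z⁻¹) * X ^ 2 + C (-1) * X + C (-z⁻¹)) (by rw [hdeg]; norm_num)
    refine ⟨r, ?_⟩
    simp only [IsRoot, eval_add, eval_mul, eval_pow, eval_C, eval_X] at hr
    linear_combination hr
  obtain ⟨rb, hrb⟩ : ∃ x : ℂ, x^2 + (ra - z⁻¹)*x + (ra^2 - z⁻¹*ra - 1) = 0 := by
    have hdeg : (C 1 * X ^ 2 + C (ra - z⁻¹) * X + C (ra^2 - z⁻¹*ra - 1)).degree = 2 :=
      Polynomial.degree_quadratic one_ne_zero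
    obtain ⟨r, hr⟩ := Complex.exists_root
      (f := C 1 * X ^ 2 + C (ra - z⁻¹) * X + C (ra^2 - z⁻¹*ra - 1)) (by rw [hdeg]; norm_num)
    refine ⟨r, ?_⟩
    simp only [IsRoot, eval_add, eval_mul, eval_pow, eval_C, eval_X] at hr
    linear_combination hr
  set rc : ℂ := z⁻¹ - ra - rb with hrc
  have hb3 : rb^3 - z⁻¹*rb^2 - rb - z⁻¹ = 0 := by
    linear_combination (rb - ra)*hrb + hra
  have hcq : rc^2 + (ra - z⁻¹)*rc + (ra^2 - z⁻¹*ra - 1) = 0 := by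
    rw [hrc]; linear_combination hrb
  have hc3 : rc^3 - z⁻¹*rc^2 - rc - z⁻¹ = 0 := by
    linear_combination (rc - ra)*hcq + hra
  have hza : z*ra^3 - ra^2 - z*ra - 1 = 0 := by
    linear_combination z*hra + (ra^2+1)*hzw
  have hzb : z*rb^3 - rb^2 - z*rb - 1 = 0 := by
    linear_combination z*hb3 + (rb^2+1)*hzw
  have hzc : z*rc^3 - rc^2 - z*rc - 1 = 0 := by
    linear_combination z*hc3 + (rc^2+1)*hzw
  have hrel : rc*(ra*rb - 1) = ra + rb := by
    rw [hrc]; linear_combination hra - ra*hrb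
  obtain ⟨t, htim, htz⟩ : ∃ t : ℂ, 0 < t.im ∧ z*t^3 - t^2 - z*t - 1 = 0 := by
    by_cases hA : 0 < ra.im
    · exact ⟨ra, hA, hza⟩
    by_cases hB : 0 < rb.im
    · exact ⟨rb, hB, hzb⟩
    by_cases hC : 0 < rc.im
    · exact ⟨rc, hC, hzc⟩
    exfalso
    push_neg at hA hB hC
    have hA' : ra.im < 0 := lt_of_le_of_ne hA (nonreal ra hza)
    have hB' : rb.im < 0 := lt_of_le_of_ne hB (nonreal rb hzb)
    have hC' : rc.im < 0 := lt_of_le_of_ne hC (nonreal rc hzc)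
    have hconj : (starRingEnd ℂ) rc * ((starRingEnd ℂ) ra * (starRingEnd ℂ) rb - 1)
        = (starRingEnd ℂ) ra + (starRingEnd ℂ) rb := by
      have hx := congrArg (starRingEnd ℂ) hrel
      simpa [map_mul, map_sub, map_add, map_one] using hx
    have h1 : 0 < ((starRingEnd ℂ) ra).im := by
      simp only [Complex.conj_im]; linarith
    have h2 : 0 < ((starRingEnd ℂ) rb).im := by
      simp only [Complex.conj_im]; linarith
    have h3 := third_im _ _ _ h1 h2 hconj
    simp only [Complex.conj_im] at h3
    linarith
  refine ⟨t, ⟨htim, (equiv t).mpr htz⟩, ?_⟩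
  rintro m' ⟨him', heq'⟩
  exact uniq m' t him' htim ((equiv m').mp heq') htz
end

section
/- If z, m are in the upper half-plane and z = (m²+1)/(m³−m), then |m| ≤ 1 and |m| ≤ 4/Im z. -/
/-!
Partial fractions give `z = (m - 1)⁻¹ + (m + 1)⁻¹ - m⁻¹`, and `Im w⁻¹ = -Im w / |w|²`, so
`Im z = Im m · (1/|m|² - 1/|m - 1|² - 1/|m + 1|²)`. Positivity of `Im z` gives
`1/|m - 1|² + 1/|m + 1|² < 1/|m|²`; by the harmonic–arithmetic mean inequality and the
parallelogram law `|m - 1|² + |m + 1|² = 2|m|² + 2`, the left side is at least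
`2/(|m|² + 1)`, whence `|m| < 1`. Since `m ± 1` also lie in the upper half-plane,
`Im (m ± 1)⁻¹ < 0`, so `Im z ≤ -Im m⁻¹ ≤ |m|⁻¹`.
-/

open Complex

lemma sq_add_one_div_cube_sub_self {K : Type*} [Field K] {m : K} (h₀ : m ≠ 0)
    (h₁ : m - 1 ≠ 0) (h₂ : m + 1 ≠ 0) :
    (m ^ 2 + 1) / (m ^ 3 - m) = (m - 1)⁻¹ + (m + 1)⁻¹ - m⁻¹ := by
  have h : m ^ 3 - m = m * (m - 1) * (m + 1) := by ring
  rw [h]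
  field_simp
  ring

section LinearOrderedField

variable {K : Type*} [Field K] [LinearOrder K] [IsStrictOrderedRing K]

lemma four_div_add_le_inv_add_inv {a b : K} (ha : 0 < a) (hb : 0 < b) :
    4 / (a + b) ≤ a⁻¹ + b⁻¹ := by
  rw [div_le_iff₀ (by positivity)]
  field_simp
  nlinarith [sq_nonneg (a - b)]

lemma lt_one_of_inv_add_inv_lt {a b c : K} (ha : 0 < a) (hb : 0 < b) (hc : 0 < c)
    (hsum : b + c = 2 * a + 2) (h : b⁻¹ + c⁻¹ < a⁻¹) : a < 1 := by
  have hlt : 4 / (2 * a + 2) < a⁻¹ := hsum ▸ (four_div_add_le_inv_add_inv hb hc).trans_lt h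
  rw [div_lt_iff₀ (by positivity)] at hlt
  field_simp at hlt
  linarith

end LinearOrderedField

namespace Complex

lemma ne_zero_of_im_pos {w : ℂ} (hw : 0 < w.im) : w ≠ 0 := by
  rintro rfl
  simp at hw

lemma im_inv_neg_of_im_pos {w : ℂ} (hw : 0 < w.im) : (w⁻¹).im < 0 := by
  rw [inv_im, neg_div, neg_lt_zero]
  exact div_pos hw (normSq_pos.mpr (ne_zero_of_im_pos hw))

lemma normSq_sub_one_add_normSq_add_one (m : ℂ) :
    normSq (m - 1) + normSq (m + 1) = 2 * normSq m + 2 := by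
  simp only [normSq_apply, sub_re, sub_im, add_re, add_im, one_re, one_im]
  ring

lemma im_inv_sub_one_add_inv_add_one_sub_inv (m : ℂ) :
    ((m - 1)⁻¹ + (m + 1)⁻¹ - m⁻¹).im
      = m.im * ((normSq m)⁻¹ - (normSq (m - 1))⁻¹ - (normSq (m + 1))⁻¹) := by
  simp only [sub_im, add_im, inv_im, one_im]
  ring

lemma normSq_lt_one_of_im_pos {m : ℂ} (hm : 0 < m.im)
    (h : 0 < ((m - 1)⁻¹ + (m + 1)⁻¹ - m⁻¹).im) : normSq m < 1 := by
  have hm₁ : 0 < (m - 1).im := by simpa using hm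
  have hm₂ : 0 < (m + 1).im := by simpa using hm
  rw [im_inv_sub_one_add_inv_add_one_sub_inv, mul_pos_iff_of_pos_left hm, sub_sub, sub_pos] at h
  exact lt_one_of_inv_add_inv_lt (normSq_pos.mpr (ne_zero_of_im_pos hm))
    (normSq_pos.mpr (ne_zero_of_im_pos hm₁)) (normSq_pos.mpr (ne_zero_of_im_pos hm₂))
    (normSq_sub_one_add_normSq_add_one m) h

lemma norm_mul_im_le_one_of_im_pos {m : ℂ} (hm : 0 < m.im) :
    ‖m‖ * ((m - 1)⁻¹ + (m + 1)⁻¹ - m⁻¹).im ≤ 1 := by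
  have hinv₁ : ((m - 1)⁻¹).im < 0 := im_inv_neg_of_im_pos (by simpa using hm)
  have hinv₂ : ((m + 1)⁻¹).im < 0 := im_inv_neg_of_im_pos (by simpa using hm)
  have hle : ((m - 1)⁻¹ + (m + 1)⁻¹ - m⁻¹).im ≤ ‖m‖⁻¹ := by
    calc ((m - 1)⁻¹ + (m + 1)⁻¹ - m⁻¹).im ≤ -(m⁻¹).im := by
          simp only [sub_im, add_im]; linarith
      _ ≤ ‖m⁻¹‖ := (neg_le_abs _).trans (abs_im_le_norm _)
      _ = ‖m‖⁻¹ := norm_inv m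
  calc ‖m‖ * ((m - 1)⁻¹ + (m + 1)⁻¹ - m⁻¹).im ≤ ‖m‖ * ‖m‖⁻¹ := by gcongr
    _ ≤ 1 := mul_inv_le_one

end Complex

theorem stmt_8_general (z m : ℂ) (hz : 0 < z.im) (hm : 0 < m.im)
    (heq : z = (m ^ 2 + 1) / (m ^ 3 - m)) :
    ‖m‖ ≤ 1 ∧ ‖m‖ ≤ 4 / z.im := by
  have hm₁ : 0 < (m - 1).im := by simpa using hm
  have hm₂ : 0 < (m + 1).im := by simpa using hm
  have hz' : z = (m - 1)⁻¹ + (m + 1)⁻¹ - m⁻¹ := heq.trans <|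
    sq_add_one_div_cube_sub_self (ne_zero_of_im_pos hm) (ne_zero_of_im_pos hm₁)
      (ne_zero_of_im_pos hm₂)
  subst hz'
  constructor
  · rw [← sq_le_one_iff₀ (norm_nonneg m), Complex.sq_norm]
    exact (normSq_lt_one_of_im_pos hm hz).le
  · rw [le_div_iff₀ hz]
    linarith [norm_mul_im_le_one_of_im_pos hm]

theorem stmt_8 (z m : ℂ) (hz : 0 < z.im) (hm : 0 < m.im) (hne : m ^ 3 ≠ m)
    (heq : z = (m ^ 2 + 1) / (m ^ 3 - m)) :
    ‖m‖ ≤ 1 ∧ ‖m‖ ≤ 4 / z.im :=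
  stmt_8_general z m hz hm heq
end

section
/- If z, m ∈ ℂ with m(m²−1) ≠ 0 and z = (m²+1)/(m³−m), then (1 − z²/ζ²)(m³−m)² = (m²−ρ²)(m²−ω²)², where ω = √(√5−2), ζ = √((11+5√5)/2), and ρ = (ω³+5ω)/2. -/
/-! Put `s = √5`. Then `ω² = s - 2`, `ρ² = (s + 1)/2` and `1/ζ² = (5s - 11)/2`, because
`(11 + 5s)(5s - 11) = 4`. After substituting `z (m³ - m) = m² + 1`, both sides are polynomials in
`m²` and `s`, and they agree modulo `s² = 5`. -/

section GoldenIdentity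

variable {K : Type*} [Field K] [CharZero K] {s : K}

theorem sq_half_cube_add_five_mul {w : K} (hs : s ^ 2 = 5) (hw : w ^ 2 = s - 2) :
    ((w ^ 3 + 5 * w) / 2) ^ 2 = (s + 1) / 2 := by
  linear_combination (w ^ 4 / 4 + w ^ 2 * (s + 8) / 4 + (s ^ 2 + 6 * s + 9) / 4) * hw
    + ((s + 4) / 4) * hs

theorem inv_eq_of_sq_eq_half_eleven_add {q : K} (hs : s ^ 2 = 5)
    (hq : q ^ 2 = (11 + 5 * s) / 2) :
    (q ^ 2)⁻¹ = (5 * s - 11) / 2 := by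
  refine inv_eq_of_mul_eq_one_right ?_
  rw [hq]
  field_simp
  linear_combination 25 * hs

theorem one_sub_div_sq_mul_sq_eq {w q m z : K} (hs : s ^ 2 = 5) (hw : w ^ 2 = s - 2)
    (hq : q ^ 2 = (11 + 5 * s) / 2) (hm : m ^ 3 - m ≠ 0) (hz : z = (m ^ 2 + 1) / (m ^ 3 - m)) :
    (1 - z ^ 2 / q ^ 2) * (m ^ 3 - m) ^ 2 =
      (m ^ 2 - ((w ^ 3 + 5 * w) / 2) ^ 2) * (m ^ 2 - w ^ 2) ^ 2 := by
  have hzm : z * (m ^ 3 - m) = m ^ 2 + 1 := by rw [hz]; exact div_mul_cancel₀ _ hm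
  calc (1 - z ^ 2 / q ^ 2) * (m ^ 3 - m) ^ 2
      = (m ^ 3 - m) ^ 2 - (z * (m ^ 3 - m)) ^ 2 * (q ^ 2)⁻¹ := by ring
    _ = (m ^ 3 - m) ^ 2 - (m ^ 2 + 1) ^ 2 * ((5 * s - 11) / 2) := by
        rw [hzm, inv_eq_of_sq_eq_half_eleven_add hs hq]
    _ = (m ^ 2 - (s + 1) / 2) * (m ^ 2 - (s - 2)) ^ 2 := by
        linear_combination ((s - 3) / 2 - 2 * m ^ 2) * hs
    _ = (m ^ 2 - ((w ^ 3 + 5 * w) / 2) ^ 2) * (m ^ 2 - w ^ 2) ^ 2 := by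
        rw [sq_half_cube_add_five_mul hs hw, hw]

end GoldenIdentity

theorem two_le_sqrt_five : 2 ≤ Real.sqrt 5 :=
  Real.le_sqrt_of_sq_le (by norm_num)

theorem stmt_9 (z m : ℂ) (h : m * (m ^ 2 - 1) ≠ 0)
    (heq : z = (m ^ 2 + 1) / (m ^ 3 - m))
    (ω ζ ρ : ℝ)
    (hω : ω = Real.sqrt (Real.sqrt 5 - 2))
    (hζ : ζ = Real.sqrt ((11 + 5 * Real.sqrt 5) / 2))
    (hρ : ρ = (ω ^ 3 + 5 * ω) / 2) :
    (1 - z ^ 2 / (ζ : ℂ) ^ 2) * (m ^ 3 - m) ^ 2 =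
      (m ^ 2 - (ρ : ℂ) ^ 2) * (m ^ 2 - (ω : ℂ) ^ 2) ^ 2 := by
  have hs : ((Real.sqrt 5 : ℝ) : ℂ) ^ 2 = 5 := by
    exact_mod_cast Real.sq_sqrt (by norm_num : (0 : ℝ) ≤ 5)
  have hω2 : (ω : ℂ) ^ 2 = (Real.sqrt 5 : ℂ) - 2 := by
    rw [hω]; exact_mod_cast Real.sq_sqrt (by linarith [two_le_sqrt_five])
  have hζ2 : (ζ : ℂ) ^ 2 = (11 + 5 * (Real.sqrt 5 : ℂ)) / 2 := by
    rw [hζ]; exact_mod_cast Real.sq_sqrt (by linarith [two_le_sqrt_five])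
  have hm : m ^ 3 - m ≠ 0 := by rwa [show m ^ 3 - m = m * (m ^ 2 - 1) by ring]
  rw [hρ]
  push_cast
  exact one_sub_div_sq_mul_sq_eq hs hω2 hζ2 hm heq
end

section
/- Let α > 0 and let Z be a nonnegative real random variable with sup over p ∈ [2,∞) of p^{−α}·(E Z^p)^{1/p} ≤ 1. Then for all t > 0, P(Z > t^α) ≤ exp(α(2 − t/e)). -/
open MeasureTheory

theorem stmt_14 {Ω : Type*} [MeasurableSpace Ω] (μ : Measure Ω) [IsProbabilityMeasure μ]
    (Z : Ω → ℝ) (hZmeas : Measurable Z) (hZnn : ∀ ω, 0 ≤ Z ω) (α : ℝ) (hα : 0 < α)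
    (hmom : ∀ p : ℝ, 2 ≤ p →
      (∫⁻ ω, ENNReal.ofReal (Z ω ^ p) ∂μ) ^ (1 / p) ≤ ENNReal.ofReal (p ^ α)) :
    ∀ t : ℝ, 0 < t →
      μ {ω | Z ω > t ^ α} ≤ ENNReal.ofReal (Real.exp (α * (2 - t / Real.exp 1))) := by
  intro t ht
  have he1 : (0:ℝ) < Real.exp 1 := Real.exp_pos 1
  by_cases hcase : t / Real.exp 1 < 2
  · calc μ {ω | Z ω > t ^ α} ≤ μ Set.univ := measure_mono (Set.subset_univ _)
      _ = 1 := measure_univ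
      _ ≤ ENNReal.ofReal (Real.exp (α * (2 - t / Real.exp 1))) := by
          rw [ENNReal.one_le_ofReal]
          apply Real.one_le_exp
          have : 0 < 2 - t / Real.exp 1 := by linarith
          positivity
  · push_neg at hcase
    set p := t / Real.exp 1 with hpdef
    have hp0 : 0 < p := by positivity
    have hp2 : 2 ≤ p := hcase
    have htpos : 0 < t ^ α := Real.rpow_pos_of_pos ht α
    have hppos : 0 < p ^ α := Real.rpow_pos_of_pos hp0 α
    set ε : ENNReal := ENNReal.ofReal ((t ^ α) ^ p) with hε
    have hεpos : 0 < ε := ENNReal.ofReal_pos.2 (Real.rpow_pos_of_pos htpos p)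
    have hf : AEMeasurable (fun ω => ENNReal.ofReal (Z ω ^ p)) μ :=
      by fun_prop
    have hsub : {ω | Z ω > t ^ α} ⊆ {ω | ε ≤ ENNReal.ofReal (Z ω ^ p)} := by
      intro ω hω
      exact ENNReal.ofReal_le_ofReal (Real.rpow_le_rpow htpos.le (le_of_lt hω) hp0.le)
    have hmarkov := mul_meas_ge_le_lintegral₀ hf ε
    have hA : (∫⁻ ω, ENNReal.ofReal (Z ω ^ p) ∂μ) ≤ ENNReal.ofReal ((p ^ α) ^ p) := by
      have h1 := hmom p hp2
      have h2 : ((∫⁻ ω, ENNReal.ofReal (Z ω ^ p) ∂μ) ^ (1 / p)) ^ p ≤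
          (ENNReal.ofReal (p ^ α)) ^ p := ENNReal.rpow_le_rpow h1 hp0.le
      rwa [← ENNReal.rpow_mul, one_div, inv_mul_cancel₀ hp0.ne', ENNReal.rpow_one,
        ENNReal.ofReal_rpow_of_pos hppos] at h2
    have hstep : μ {ω | Z ω > t ^ α} ≤ ENNReal.ofReal ((p ^ α) ^ p) / ε := by
      rw [ENNReal.le_div_iff_mul_le (Or.inl hεpos.ne') (Or.inl ENNReal.ofReal_ne_top)]
      calc μ {ω | Z ω > t ^ α} * ε ≤ μ {ω | ε ≤ ENNReal.ofReal (Z ω ^ p)} * ε :=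
            mul_le_mul_left (measure_mono hsub) ε
        _ = ε * μ {ω | ε ≤ ENNReal.ofReal (Z ω ^ p)} := mul_comm _ _
        _ ≤ ∫⁻ ω, ENNReal.ofReal (Z ω ^ p) ∂μ := hmarkov
        _ ≤ ENNReal.ofReal ((p ^ α) ^ p) := hA
    refine hstep.trans ?_
    rw [hε, ← ENNReal.ofReal_div_of_pos (Real.rpow_pos_of_pos htpos p)]
    apply ENNReal.ofReal_le_ofReal
    have hkey : (p ^ α) ^ p / (t ^ α) ^ p = Real.exp (-(α * p)) := by
      rw [← Real.div_rpow hppos.le (le_of_lt htpos),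
        ← Real.div_rpow hp0.le ht.le,
        ← Real.rpow_mul (by positivity : (0:ℝ) ≤ p / t)]
      have hpt : p / t = Real.exp (-1) := by
        rw [Real.exp_neg, hpdef]; field_simp
      rw [hpt, ← Real.exp_one_rpow (-1 : ℝ),
        ← Real.rpow_mul (Real.exp_pos 1).le, neg_one_mul, Real.exp_one_rpow]
    rw [hkey]
    apply Real.exp_le_exp.2
    nlinarith
end

section
/- For all real s ≥ 0, Γ(1 + s) ≤ (1 + s)^s, where Γ is the Gamma function. -/
lemma gamma_le_one_aux (s : ℝ) (hs : 0 ≤ s) (hs1 : s ≤ 1) :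
    Real.Gamma (1 + s) ≤ 1 := by
  have h := Real.convexOn_Gamma.2 (show (1:ℝ) ∈ Set.Ioi 0 by norm_num)
    (show (2:ℝ) ∈ Set.Ioi 0 by norm_num) (by linarith : (0:ℝ) ≤ 1 - s) hs (by ring)
  simp only [smul_eq_mul, mul_one, Real.Gamma_one, Real.Gamma_two] at h
  calc Real.Gamma (1 + s) = Real.Gamma ((1 - s) * 1 + s * 2) := by ring_nf
    _ ≤ (1 - s) * 1 + s * 1 := by simpa using h
    _ = 1 := by ring

lemma gamma_aux : ∀ n : ℕ, ∀ s : ℝ, 0 ≤ s → s ≤ n + 1 →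
    Real.Gamma (1 + s) ≤ (1 + s) ^ s := by
  intro n
  induction n with
  | zero =>
    intro s hs hs1
    push_cast at hs1
    rw [zero_add] at hs1
    calc Real.Gamma (1 + s) ≤ 1 := gamma_le_one_aux s hs hs1
      _ ≤ (1 + s) ^ s := Real.one_le_rpow (by linarith) hs
  | succ n ih =>
    intro s hs hs2
    rcases le_or_gt s (n + 1) with h | h
    · exact ih s hs h
    · have hs1 : (1 : ℝ) ≤ s := by
        have : (0:ℝ) ≤ n := Nat.cast_nonneg n
        linarith
      have hsp : 0 < s := by linarith
      have key : Real.Gamma s ≤ s ^ (s - 1) := by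
        have h2 : Real.Gamma (1 + (s - 1)) ≤ (1 + (s - 1)) ^ (s - 1) := by
          refine ih (s - 1) (by linarith) ?_
          push_cast at hs2 ⊢; linarith
        have e1 : 1 + (s - 1) = s := by ring
        rwa [e1] at h2
      have hG : Real.Gamma (1 + s) = s * Real.Gamma s := by
        rw [add_comm, Real.Gamma_add_one (by positivity)]
      rw [hG]
      calc s * Real.Gamma s ≤ s * s ^ (s - 1) :=
            mul_le_mul_of_nonneg_left key hsp.le
        _ = s ^ s := by
            nth_rewrite 1 [← Real.rpow_one s]
            rw [← Real.rpow_add hsp]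
            norm_num
        _ ≤ (1 + s) ^ s := Real.rpow_le_rpow hsp.le (by linarith) hs

theorem stmt_16 (s : ℝ) (hs : 0 ≤ s) : Real.Gamma (1 + s) ≤ (1 + s) ^ s := by
  exact gamma_aux ⌈s⌉₊ s hs (by
    have := Nat.le_ceil s
    linarith)
end

section
/- Let S be a finite-dimensional unital Banach algebra, Φ₀ ∈ B(S) a bounded linear map, and (Λ₀, M₀, κ₀) a nondegenerate solution of the Schwinger-Dyson equation: 1 + (Λ₀ + Φ₀(M₀))M₀ = 0, where κ₀ is the inverse of the map x ↦ M₀⁻¹x − Φ₀(x)M₀. Fix ε and δ with 0 ≤ ε ≤ 1/(4‖κ₀‖⋆‖Φ₀‖⋆) and 0 ≤ δ ≤ ε/(4‖κ₀‖⋆‖M₀‖⋆), where x⋆ = max(x,1). Then for every Λ with ‖Λ − Λ₀‖ ≤ δ there exists a unique M with ‖M − M₀‖ ≤ ε such that 1 + (Λ + Φ₀(M))M = 0. -/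
open Function Metric Set
open scoped NNReal

/-!
Write `Θ = Λ - Λ₀`. Since `1 + (Λ₀ + Φ₀ M₀) M₀ = 0` gives `M₀⁻¹ = -(Λ₀ + Φ₀ M₀)`, the part of
`1 + (Λ + Φ₀ M) M` that is linear in `x = M - M₀` is minus the linearization
`x ↦ M₀⁻¹ x - Φ₀(x) M₀`, so applying its inverse `κ₀` turns the equation into the fixed-point
problem `M = M₀ + κ₀(Θ M + Φ₀(x) x)`. The smallness of `ε` and `δ` makes this map send the closed
`ε`-ball around `M₀` into itself and contract it with constant `3/4`, so Banach's fixed point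
theorem gives the unique solution in that ball.
-/

theorem existsUnique_isFixedPt_of_mapsTo {α : Type*} [MetricSpace α]
    {f : α → α} {s : Set α} {K : ℝ≥0} (hs : IsComplete s) (hne : s.Nonempty) (hK : K < 1)
    (hmaps : MapsTo f s s) (hf : LipschitzOnWith K f s) :
    ∃! x, x ∈ s ∧ IsFixedPt f x := by
  have hc : ContractingWith K (hmaps.restrict f s s) := ⟨hK, hf.mapsToRestrict hmaps⟩
  obtain ⟨x₀, hx₀⟩ := hne
  obtain ⟨x, hxs, hfx, -⟩ := hc.exists_fixedPoint' hs hmaps hx₀ (edist_ne_top _ _)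
  refine ⟨x, ⟨hxs, hfx⟩, fun y ⟨hys, hfy⟩ => ?_⟩
  have := hc.fixedPoint_unique' (x := ⟨y, hys⟩) (y := ⟨x, hxs⟩) (Subtype.ext hfy) (Subtype.ext hfx)
  exact congrArg Subtype.val this

theorem Ring.inverse_eq_of_mul_eq_one_left {R : Type*} [MonoidWithZero R] {a b : R}
    (hb : IsUnit b) (h : a * b = 1) : Ring.inverse b = a :=
  calc Ring.inverse b = a * b * Ring.inverse b := by rw [h, one_mul]
    _ = a := by rw [mul_assoc, Ring.mul_inverse_cancel b hb, mul_one]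

theorem smallness_of_le_div_four_mul_max {k p n ε δ : ℝ} (hk : 0 ≤ k) (hp : 0 ≤ p) (hδ : 0 ≤ δ)
    (hε' : ε ≤ 1 / (4 * max k 1 * max p 1)) (hδ' : δ ≤ ε / (4 * max k 1 * max n 1)) :
    k * p * ε ≤ 1 / 4 ∧ k * δ * (n + ε) ≤ ε / 2 ∧ k * δ ≤ 1 / 4 := by
  set K := max k 1
  set P := max p 1
  set N := max n 1
  have hK1 : 1 ≤ K := le_max_right _ _
  have hP1 : 1 ≤ P := le_max_right _ _
  have hN1 : 1 ≤ N := le_max_right _ _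
  have hkp : k * p ≤ K * P := mul_le_mul (le_max_left _ _) (le_max_left _ _) hp (by positivity)
  have hkn : k * n ≤ K * N := by nlinarith [le_max_left k 1, le_max_left n 1]
  have hk' : k ≤ K * N := by nlinarith [le_max_left k 1]
  rw [le_div_iff₀ (by positivity)] at hε' hδ'
  have hε : 0 ≤ ε := le_trans (by positivity) hδ'
  have hε1 : ε ≤ 1 / 4 := by nlinarith [one_le_mul_of_one_le_of_one_le hK1 hP1]
  have hkδ : k * δ ≤ ε / 4 := by nlinarith [mul_le_mul_of_nonneg_right hk' hδ]
  refine ⟨by nlinarith, ?_, by linarith⟩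
  nlinarith [mul_le_mul_of_nonneg_right hkn hδ, mul_le_mul_of_nonneg_right hkδ hε]

section SchwingerDyson

variable {𝕜 S : Type*} [NontriviallyNormedField 𝕜] [NormedRing S] [NormedSpace 𝕜 S]
  (κ Φ : S →L[𝕜] S)

/-- In terms of `x = M - M₀` this is `M₀ + κ (Θ M₀ + Θ x + Φ(x) x)`. -/
def schwingerDysonStep (Θ M₀ M : S) : S :=
  M₀ + κ (Θ * M + Φ (M - M₀) * (M - M₀))

variable {Λ₀ M₀ : S}

theorem schwingerDyson_eq_sub_linearization (hSD : 1 + (Λ₀ + Φ M₀) * M₀ = 0) (Λ M : S) :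
    1 + (Λ + Φ M) * M = ((Λ - Λ₀) * M + Φ (M - M₀) * (M - M₀)) -
      (-(Λ₀ + Φ M₀) * (M - M₀) - Φ (M - M₀) * M₀) := by
  have hΦ : Φ M = Φ M₀ + Φ (M - M₀) := by rw [← map_add, add_sub_cancel]
  rw [hΦ, ← sub_eq_zero, ← hSD]
  noncomm_ring

theorem schwingerDyson_iff_isFixedPt (hM : IsUnit M₀) (hSD : 1 + (Λ₀ + Φ M₀) * M₀ = 0)
    (hκ₁ : ∀ x : S, κ (Ring.inverse M₀ * x - Φ x * M₀) = x)
    (hκ₂ : ∀ x : S, Ring.inverse M₀ * κ x - Φ (κ x) * M₀ = x) (Λ M : S) :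
    1 + (Λ + Φ M) * M = 0 ↔ IsFixedPt (schwingerDysonStep κ Φ (Λ - Λ₀) M₀) M := by
  have hinv : Ring.inverse M₀ = -(Λ₀ + Φ M₀) :=
    Ring.inverse_eq_of_mul_eq_one_left hM <| by
      rw [neg_mul, neg_eq_iff_eq_neg, eq_neg_iff_add_eq_zero, add_comm, hSD]
  rw [schwingerDyson_eq_sub_linearization Φ hSD, ← hinv, sub_eq_zero]
  constructor
  · intro h
    change M₀ + κ _ = M
    rw [h, hκ₁, add_sub_cancel]
  · intro h
    exact (hκ₂ _).symm.trans (by rw [eq_sub_of_add_eq' h])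

theorem norm_schwingerDysonStep_sub_le (Θ M : S) :
    ‖schwingerDysonStep κ Φ Θ M₀ M - M₀‖ ≤ ‖κ‖ * (‖Θ‖ * ‖M‖ + ‖Φ‖ * ‖M - M₀‖ ^ 2) := by
  rw [schwingerDysonStep, add_sub_cancel_left]
  refine κ.le_opNorm_of_le ?_
  calc ‖Θ * M + Φ (M - M₀) * (M - M₀)‖ ≤ ‖Θ‖ * ‖M‖ + ‖Φ (M - M₀)‖ * ‖M - M₀‖ :=
        (norm_add_le _ _).trans (add_le_add (norm_mul_le _ _) (norm_mul_le _ _))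
    _ ≤ ‖Θ‖ * ‖M‖ + ‖Φ‖ * ‖M - M₀‖ ^ 2 := by
        rw [sq, ← mul_assoc]
        gcongr
        exact Φ.le_opNorm _

theorem norm_schwingerDysonStep_sub_schwingerDysonStep_le (Θ M M' : S) :
    ‖schwingerDysonStep κ Φ Θ M₀ M - schwingerDysonStep κ Φ Θ M₀ M'‖ ≤
      ‖κ‖ * (‖Θ‖ + ‖Φ‖ * (‖M - M₀‖ + ‖M' - M₀‖)) * ‖M - M'‖ := by
  have hdiff : schwingerDysonStep κ Φ Θ M₀ M - schwingerDysonStep κ Φ Θ M₀ M' =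
      κ (Θ * (M - M') + Φ (M - M') * (M - M₀) + Φ (M' - M₀) * (M - M')) := by
    have hΦ : Φ (M - M₀) = Φ (M - M') + Φ (M' - M₀) := by rw [← map_add, sub_add_sub_cancel]
    rw [schwingerDysonStep, schwingerDysonStep, add_sub_add_left_eq_sub, ← map_sub, hΦ]
    congr 1
    noncomm_ring
  rw [hdiff, mul_assoc]
  refine κ.le_opNorm_of_le ?_
  calc ‖Θ * (M - M') + Φ (M - M') * (M - M₀) + Φ (M' - M₀) * (M - M')‖
      ≤ ‖Θ‖ * ‖M - M'‖ + ‖Φ‖ * ‖M - M'‖ * ‖M - M₀‖ + ‖Φ‖ * ‖M' - M₀‖ * ‖M - M'‖ := by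
        refine (norm_add₃_le ..).trans (add_le_add_three ?_ ?_ ?_)
        · exact norm_mul_le _ _
        · exact (norm_mul_le _ _).trans (by gcongr; exact Φ.le_opNorm _)
        · exact (norm_mul_le _ _).trans (by gcongr; exact Φ.le_opNorm _)
    _ = (‖Θ‖ + ‖Φ‖ * (‖M - M₀‖ + ‖M' - M₀‖)) * ‖M - M'‖ := by ring

theorem mapsTo_schwingerDysonStep_closedBall {Θ : S} {ε δ : ℝ} (hΘ : ‖Θ‖ ≤ δ)
    (hΦε : ‖κ‖ * ‖Φ‖ * ε ≤ 1 / 4) (hM₀δ : ‖κ‖ * δ * (‖M₀‖ + ε) ≤ ε / 2) :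
    MapsTo (schwingerDysonStep κ Φ Θ M₀) (closedBall M₀ ε) (closedBall M₀ ε) := by
  intro M hM
  rw [mem_closedBall_iff_norm] at hM ⊢
  have hMnorm : ‖M‖ ≤ ‖M₀‖ + ε := by
    calc ‖M‖ = ‖M₀ + (M - M₀)‖ := by rw [add_sub_cancel]
      _ ≤ ‖M₀‖ + ε := (norm_add_le _ _).trans (by gcongr)
  have hε : 0 ≤ ε := (norm_nonneg _).trans hM
  have hδ : 0 ≤ δ := (norm_nonneg Θ).trans hΘ
  calc ‖schwingerDysonStep κ Φ Θ M₀ M - M₀‖ ≤ ‖κ‖ * (‖Θ‖ * ‖M‖ + ‖Φ‖ * ‖M - M₀‖ ^ 2) :=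
        norm_schwingerDysonStep_sub_le κ Φ Θ M
    _ ≤ ‖κ‖ * (δ * (‖M₀‖ + ε) + ‖Φ‖ * ε ^ 2) := by gcongr
    _ = ‖κ‖ * δ * (‖M₀‖ + ε) + ‖κ‖ * ‖Φ‖ * ε * ε := by ring
    _ ≤ ε / 2 + 1 / 4 * ε := by gcongr
    _ ≤ ε := by linarith

theorem lipschitzOnWith_schwingerDysonStep_closedBall {Θ : S} {ε δ : ℝ} (hΘ : ‖Θ‖ ≤ δ)
    (hΦε : ‖κ‖ * ‖Φ‖ * ε ≤ 1 / 4) (hκδ : ‖κ‖ * δ ≤ 1 / 4) :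
    LipschitzOnWith (3 / 4) (schwingerDysonStep κ Φ Θ M₀) (closedBall M₀ ε) := by
  refine LipschitzOnWith.of_dist_le_mul fun M hM M' hM' => ?_
  rw [mem_closedBall_iff_norm] at hM hM'
  rw [dist_eq_norm, dist_eq_norm]
  calc _ ≤ ‖κ‖ * (‖Θ‖ + ‖Φ‖ * (‖M - M₀‖ + ‖M' - M₀‖)) * ‖M - M'‖ :=
        norm_schwingerDysonStep_sub_schwingerDysonStep_le κ Φ Θ M M'
    _ ≤ ‖κ‖ * (δ + ‖Φ‖ * (ε + ε)) * ‖M - M'‖ := by gcongr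
    _ = (‖κ‖ * δ + 2 * (‖κ‖ * ‖Φ‖ * ε)) * ‖M - M'‖ := by ring
    _ ≤ (1 / 4 + 2 * (1 / 4)) * ‖M - M'‖ := by gcongr
    _ = ((3 / 4 : ℝ≥0) : ℝ) * ‖M - M'‖ := by norm_num

end SchwingerDyson

theorem stmt_17_general {S : Type*} [NormedRing S] [NormedAlgebra ℂ S]
    [FiniteDimensional ℂ S]
    (Φ₀ : S →L[ℂ] S) (Λ₀ M₀ : S) (κ₀ : S →L[ℂ] S)
    (hM : IsUnit M₀)
    (hSD : 1 + (Λ₀ + Φ₀ M₀) * M₀ = 0)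
    (hκ₁ : ∀ x : S, κ₀ (Ring.inverse M₀ * x - Φ₀ x * M₀) = x)
    (hκ₂ : ∀ x : S, Ring.inverse M₀ * κ₀ x - Φ₀ (κ₀ x) * M₀ = x)
    (ε δ : ℝ)
    (hε : 0 ≤ ε) (hε' : ε ≤ 1 / (4 * max ‖κ₀‖ 1 * max ‖Φ₀‖ 1))
    (hδ : 0 ≤ δ) (hδ' : δ ≤ ε / (4 * max ‖κ₀‖ 1 * max ‖M₀‖ 1)) :
    ∀ Λ : S, ‖Λ - Λ₀‖ ≤ δ →
      ∃! M : S, ‖M - M₀‖ ≤ ε ∧ 1 + (Λ + Φ₀ M) * M = 0 := by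
  intro Λ hΛ
  have : CompleteSpace S := FiniteDimensional.complete ℂ S
  obtain ⟨hΦε, hM₀δ, hκδ⟩ :=
    smallness_of_le_div_four_mul_max (norm_nonneg κ₀) (norm_nonneg Φ₀) hδ hε' hδ'
  simp_rw [← mem_closedBall_iff_norm, schwingerDyson_iff_isFixedPt κ₀ Φ₀ hM hSD hκ₁ hκ₂]
  exact existsUnique_isFixedPt_of_mapsTo isClosed_closedBall.isComplete (nonempty_closedBall.2 hε)
    (by norm_num) (mapsTo_schwingerDysonStep_closedBall κ₀ Φ₀ hΛ hΦε hM₀δ)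
    (lipschitzOnWith_schwingerDysonStep_closedBall κ₀ Φ₀ hΛ hΦε hκδ)

theorem stmt_17 {S : Type*} [NormedRing S] [NormOneClass S] [NormedAlgebra ℂ S]
    [FiniteDimensional ℂ S]
    (Φ₀ : S →L[ℂ] S) (Λ₀ M₀ : S) (κ₀ : S →L[ℂ] S)
    (hM : IsUnit M₀)
    (hSD : 1 + (Λ₀ + Φ₀ M₀) * M₀ = 0)
    (hκ₁ : ∀ x : S, κ₀ (Ring.inverse M₀ * x - Φ₀ x * M₀) = x)
    (hκ₂ : ∀ x : S, Ring.inverse M₀ * κ₀ x - Φ₀ (κ₀ x) * M₀ = x)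
    (ε δ : ℝ)
    (hε : 0 ≤ ε) (hε' : ε ≤ 1 / (4 * max ‖κ₀‖ 1 * max ‖Φ₀‖ 1))
    (hδ : 0 ≤ δ) (hδ' : δ ≤ ε / (4 * max ‖κ₀‖ 1 * max ‖M₀‖ 1)) :
    ∀ Λ : S, ‖Λ - Λ₀‖ ≤ δ →
      ∃! M : S, ‖M - M₀‖ ≤ ε ∧ 1 + (Λ + Φ₀ M) * M = 0 :=
  stmt_17_general Φ₀ Λ₀ M₀ κ₀ hM hSD hκ₁ hκ₂ ε δ hε hε' hδ hδ'
end

section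
/- Let S be a finite-dimensional unital Banach algebra and (Λ₀, M₀, Φ₀, κ₀) a nondegenerate solution of the Schwinger-Dyson equation 1 + (Λ₀ + Φ₀(M₀))M₀ = 0 (κ₀ inverting x ↦ M₀⁻¹x − Φ₀(x)M₀). Let G₀ ∈ S and E₀ = 1 + (Λ₀ + Φ₀(G₀))G₀. If ‖G₀ − M₀‖ ≤ 1/(8‖κ₀‖⋆‖Φ₀‖⋆), then ‖G₀ − M₀‖ ≤ 20‖κ₀‖⋆‖Φ₀‖⋆‖M₀‖⋆²‖E₀‖, where x⋆ = max(x,1). -/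
theorem stmt_18 {S : Type*} [NormedRing S] [NormOneClass S] [NormedAlgebra ℂ S]
    [FiniteDimensional ℂ S]
    (Φ₀ : S →L[ℂ] S) (Λ₀ M₀ : S) (κ₀ : S →L[ℂ] S)
    (hM : IsUnit M₀)
    (hSD : 1 + (Λ₀ + Φ₀ M₀) * M₀ = 0)
    (hκ₁ : ∀ x : S, κ₀ (Ring.inverse M₀ * x - Φ₀ x * M₀) = x)
    (hκ₂ : ∀ x : S, Ring.inverse M₀ * κ₀ x - Φ₀ (κ₀ x) * M₀ = x)
    (G₀ E₀ : S) (hE₀ : E₀ = 1 + (Λ₀ + Φ₀ G₀) * G₀)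
    (hsmall : ‖G₀ - M₀‖ ≤ 1 / (8 * max ‖κ₀‖ 1 * max ‖Φ₀‖ 1)) :
    ‖G₀ - M₀‖ ≤ 20 * max ‖κ₀‖ 1 * max ‖Φ₀‖ 1 * (max ‖M₀‖ 1) ^ 2 * ‖E₀‖ := by
  have hL : (-(Λ₀ + Φ₀ M₀)) * M₀ = 1 := by
    have h1 : (Λ₀ + Φ₀ M₀) * M₀ = -1 := by
      have := hSD; rw [add_comm] at this; exact add_eq_zero_iff_eq_neg.mp this
    rw [neg_mul, h1, neg_neg]
  have hinv : Ring.inverse M₀ = -(Λ₀ + Φ₀ M₀) := by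
    calc Ring.inverse M₀ = 1 * Ring.inverse M₀ := (one_mul _).symm
    _ = (-(Λ₀ + Φ₀ M₀) * M₀) * Ring.inverse M₀ := by rw [hL]
    _ = -(Λ₀ + Φ₀ M₀) * (M₀ * Ring.inverse M₀) := by rw [mul_assoc]
    _ = -(Λ₀ + Φ₀ M₀) := by rw [Ring.mul_inverse_cancel _ hM, mul_one]
  set Δ := G₀ - M₀ with hΔ
  have key : Ring.inverse M₀ * Δ - Φ₀ Δ * M₀ = Φ₀ Δ * Δ - E₀ := by
    rw [hinv, hE₀, hΔ, map_sub]
    have expand : -(Λ₀ + Φ₀ M₀) * (G₀ - M₀) - (Φ₀ G₀ - Φ₀ M₀) * M₀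
        = (Φ₀ G₀ - Φ₀ M₀) * (G₀ - M₀) - (1 + (Λ₀ + Φ₀ G₀) * G₀)
          + (1 + (Λ₀ + Φ₀ M₀) * M₀) := by noncomm_ring
    rw [expand, hSD, add_zero]
  have hΔeq : Δ = κ₀ (Φ₀ Δ * Δ - E₀) := by rw [← key, hκ₁]
  have hbound : ‖Δ‖ ≤ ‖κ₀‖ * (‖Φ₀‖ * ‖Δ‖ * ‖Δ‖ + ‖E₀‖) := by
    calc ‖Δ‖ = ‖κ₀ (Φ₀ Δ * Δ - E₀)‖ := by rw [← hΔeq]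
    _ ≤ ‖κ₀‖ * ‖Φ₀ Δ * Δ - E₀‖ := κ₀.le_opNorm _
    _ ≤ ‖κ₀‖ * (‖Φ₀ Δ * Δ‖ + ‖E₀‖) := by gcongr; exact norm_sub_le _ _
    _ ≤ ‖κ₀‖ * (‖Φ₀‖ * ‖Δ‖ * ‖Δ‖ + ‖E₀‖) := by
        gcongr
        calc ‖Φ₀ Δ * Δ‖ ≤ ‖Φ₀ Δ‖ * ‖Δ‖ := norm_mul_le _ _
        _ ≤ ‖Φ₀‖ * ‖Δ‖ * ‖Δ‖ := by gcongr; exact Φ₀.le_opNorm _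
  set K := max ‖κ₀‖ 1 with hK
  set P := max ‖Φ₀‖ 1 with hP
  set M := max ‖M₀‖ 1 with hMd
  have hK1 : (1:ℝ) ≤ K := le_max_right _ _
  have hP1 : (1:ℝ) ≤ P := le_max_right _ _
  have hM1 : (1:ℝ) ≤ M := le_max_right _ _
  have hKκ : ‖κ₀‖ ≤ K := le_max_left _ _
  have hPΦ : ‖Φ₀‖ ≤ P := le_max_left _ _
  have hd : (0:ℝ) ≤ ‖Δ‖ := norm_nonneg _
  have hE : (0:ℝ) ≤ ‖E₀‖ := norm_nonneg _
  have hbound2 : ‖Δ‖ ≤ K * P * ‖Δ‖ * ‖Δ‖ + K * ‖E₀‖ := by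
    calc ‖Δ‖ ≤ ‖κ₀‖ * (‖Φ₀‖ * ‖Δ‖ * ‖Δ‖ + ‖E₀‖) := hbound
    _ ≤ K * (P * ‖Δ‖ * ‖Δ‖ + ‖E₀‖) := by
        have h1 : ‖Φ₀‖ * ‖Δ‖ * ‖Δ‖ + ‖E₀‖ ≤ P * ‖Δ‖ * ‖Δ‖ + ‖E₀‖ := by gcongr
        exact mul_le_mul hKκ h1 (by positivity) (by linarith)
    _ = K * P * ‖Δ‖ * ‖Δ‖ + K * ‖E₀‖ := by ring
  have hsq : K * P * ‖Δ‖ * ‖Δ‖ ≤ ‖Δ‖ / 8 := by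
    have h1 : K * P * ‖Δ‖ * ‖Δ‖ ≤ K * P * ‖Δ‖ * (1 / (8 * K * P)) := by
      have hnn : (0:ℝ) ≤ K * P * ‖Δ‖ := by positivity
      exact mul_le_mul_of_nonneg_left hsmall hnn
    have h2 : K * P * ‖Δ‖ * (1 / (8 * K * P)) = ‖Δ‖ / 8 := by
      have hKne : K ≠ 0 := by positivity
      have hPne : P ≠ 0 := by positivity
      field_simp
    linarith
  have hPM : (1:ℝ) ≤ P * M ^ 2 := by nlinarith
  have hKE : (0:ℝ) ≤ K * ‖E₀‖ := by positivity
  have hstep : K * ‖E₀‖ ≤ K * ‖E₀‖ * (P * M ^ 2) := by nlinarith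
  nlinarith [hstep, hbound2, hsq]
end
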